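/- Let d ≥ 1, 0 < α < 2, and set a = 2^{1-1/α}. Let F : [-π,π]^d → R be measurable with 0 ≤ F ≤ M and ∫_{[-π,π]^d} F(z) dz ≥ K, where K, M > 0 satisfy (K/(M V_d))^{1/d} ≤ a. Let Φ(z) = Σ_{i=1}^d (2 - 2 cos z_i). Then ∫_{[-π,π]^d} Φ(z)^{α/2} F(z) dz ≥ (d K/(d+α))·(K/(M V_d))^{α/d} − (1/12)^{α/2}·(d K/(d+2α))·(K/(M V_d))^{2α/d}. -/

import Mathlib

open Real MeasureTheory Metric Set

/-!
Write `Φ(z) = ∑ᵢ (2 - 2 cos zᵢ)`, `c = 12^(-α/2)`, `a = 2^(1-1/α)` and `R = (K/(M V_d))^(1/d) ≤ a`.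
From `2 - 2 cos t = 4 sin² (t/2)` and `sin u ≥ u - u³/6` one gets `Φ(z) ≥ |z|² - |z|⁴/12`, and
subadditivity of `x ↦ x^(α/2)` turns this into `Φ(z)^(α/2) ≥ ψ(|z|)` with
`ψ(s) = s^α - c s^(2α)`. The profile `ψ` increases up to its peak `√3 a`, so `Φ^(α/2) ≥ ψ(R)`
off the ball `B_R`; beyond the peak this follows instead from `Φ(z) ≥ 4|z|²/π²` on the cube.
Since `0 ≤ F ≤ M` and `M |B_R| = K ≤ ∫ F`, the bathtub principle gives
`∫ Φ^(α/2) F ≥ M ∫_{B_R} ψ(|z|) dz`, and the last integral is evaluated in polar coordinates.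
-/

theorem sq_sub_pow_four_div_twelve_le_two_sub_two_cos (t : ℝ) :
    t ^ 2 - t ^ 4 / 12 ≤ 2 - 2 * cos t := by
  set u := |t| / 2 with hu
  have hu0 : 0 ≤ u := by positivity
  have hcos : 2 - 2 * cos t = 4 * sin u ^ 2 := by
    rw [sin_sq_eq_half_sub, hu, mul_div_cancel₀ _ two_ne_zero, cos_abs]; ring
  have ht : t ^ 2 = 4 * u ^ 2 := by rw [hu, ← sq_abs t]; ring
  rw [hcos, show t ^ 4 = (t ^ 2) ^ 2 by ring, ht]
  rcases le_total 0 (u - u ^ 3 / 6) with h | h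
  · nlinarith [pow_le_pow_left₀ h (sin_ge_sub_cube hu0) 2, sq_nonneg (u ^ 3)]
  · nlinarith [sq_nonneg (sin u), sq_nonneg u]

theorem rpow_two_mul_eq_sq {x : ℝ} (hx : 0 ≤ x) (y : ℝ) : x ^ (2 * y) = (x ^ y) ^ 2 := by
  rw [mul_comm, ← rpow_mul_natCast hx]; norm_num

theorem sub_mul_sq_le_sub_mul_sq {c x y : ℝ} (hxy : x ≤ y) (h : c * (x + y) ≤ 1) :
    x - c * x ^ 2 ≤ y - c * y ^ 2 := by
  nlinarith [mul_nonneg (sub_nonneg.2 hxy) (sub_nonneg.2 h)]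

theorem two_rpow_one_sub_one_div_le_two {α : ℝ} (hα : 0 < α) : (2 : ℝ) ^ (1 - 1 / α) ≤ 2 :=
  (rpow_le_rpow_of_exponent_le one_le_two (by simp; positivity)).trans_eq (rpow_one 2)

noncomputable def liYauProfile (α s : ℝ) : ℝ := s ^ α - (1 / 12 : ℝ) ^ (α / 2) * s ^ (2 * α)

-- `√3 · 2^(1-1/α)` is the peak of `liYauProfile α`, where `12^(-α/2) s^α = 1/2`.
theorem twelve_inv_rpow_mul_rpow_eq_half {α : ℝ} (hα : α ≠ 0) :
    (1 / 12 : ℝ) ^ (α / 2) * (√3 * 2 ^ (1 - 1 / α)) ^ α = 1 / 2 := by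
  have h3 : √3 ^ α = 3 ^ (α / 2) := by
    rw [sqrt_eq_rpow, ← rpow_mul (by norm_num)]; ring_nf
  have h2 : ((2 : ℝ) ^ (1 - 1 / α)) ^ α = 4 ^ (α / 2) / 2 := by
    rw [← rpow_mul (by norm_num), show (4 : ℝ) = 2 ^ (2 : ℝ) by norm_num, ← rpow_mul (by norm_num),
      sub_mul, one_div_mul_cancel hα, rpow_sub (by norm_num), rpow_one]
    ring_nf
  rw [mul_rpow (sqrt_nonneg 3) (by positivity), h3, h2, ← mul_div_assoc,
    ← mul_rpow (by norm_num) (by norm_num), ← mul_div_assoc, ← mul_rpow (by norm_num) (by norm_num)]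
  norm_num

theorem liYauProfile_monotoneOn {α : ℝ} (hα : 0 < α) :
    MonotoneOn (liYauProfile α) (Icc 0 (√3 * 2 ^ (1 - 1 / α))) := by
  intro s hs t ht hst
  have hc := twelve_inv_rpow_mul_rpow_eq_half hα.ne'
  have hcs : (1 / 12 : ℝ) ^ (α / 2) * s ^ α ≤ 1 / 2 :=
    hc ▸ mul_le_mul_of_nonneg_left (rpow_le_rpow hs.1 hs.2 hα.le) (by positivity)
  have hct : (1 / 12 : ℝ) ^ (α / 2) * t ^ α ≤ 1 / 2 :=
    hc ▸ mul_le_mul_of_nonneg_left (rpow_le_rpow ht.1 ht.2 hα.le) (by positivity)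
  simp only [liYauProfile, rpow_two_mul_eq_sq hs.1, rpow_two_mul_eq_sq ht.1]
  exact sub_mul_sq_le_sub_mul_sq (rpow_le_rpow hs.1 hst hα.le) (by linarith)

theorem continuous_liYauProfile {α : ℝ} (hα : 0 < α) : Continuous (liYauProfile α) := by
  unfold liYauProfile
  exact (continuous_id.rpow_const fun _ => Or.inr hα.le).sub <|
    continuous_const.mul (continuous_id.rpow_const fun _ => Or.inr (by positivity))

theorem liYauProfile_nonneg {α s : ℝ} (hα : 0 < α) (hs : 0 ≤ s)
    (hsρ : s ≤ √3 * 2 ^ (1 - 1 / α)) : 0 ≤ liYauProfile α s := by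
  have h := liYauProfile_monotoneOn hα ⟨le_rfl, hs.trans hsρ⟩ ⟨hs, hsρ⟩ hs
  simpa [liYauProfile, zero_rpow hα.ne', zero_rpow (by positivity : 2 * α ≠ 0)] using h

theorem liYauProfile_le_rpow {α s Φ : ℝ} (hα0 : 0 ≤ α) (hα2 : α ≤ 2) (hs : 0 ≤ s)
    (hs12 : s ^ 2 ≤ 12) (hΦ : s ^ 2 - s ^ 4 / 12 ≤ Φ) : liYauProfile α s ≤ Φ ^ (α / 2) := by
  have hq : 0 ≤ s ^ 2 - s ^ 4 / 12 := by nlinarith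
  have hsub := rpow_add_le_add_rpow hq (by positivity : 0 ≤ s ^ 4 / 12) (by positivity : 0 ≤ α / 2)
    (by linarith)
  have e1 : ((s ^ 2 : ℝ) ^ (α / 2)) = s ^ α := by
    rw [← rpow_natCast_mul hs]; congr 1; push_cast; ring
  have e2 : (s ^ 4 / 12 : ℝ) ^ (α / 2) = (1 / 12 : ℝ) ^ (α / 2) * s ^ (2 * α) := by
    rw [div_eq_mul_one_div, mul_comm, mul_rpow (by norm_num) (by positivity),
      ← rpow_natCast_mul hs]; congr 2; push_cast; ring
  rw [sub_add_cancel, e1, e2] at hsub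
  have hΦα := rpow_le_rpow hq hΦ (by positivity : 0 ≤ α / 2)
  unfold liYauProfile
  linarith

theorem liYauProfile_le_rpow_of_le {α R s Φ : ℝ} (hα0 : 0 < α) (hα2 : α ≤ 2) (hR : 0 ≤ R)
    (hRa : R ≤ 2 ^ (1 - 1 / α)) (hRs : R ≤ s) (hΦ : s ^ 2 - s ^ 4 / 12 ≤ Φ)
    (hΦπ : 4 / π ^ 2 * s ^ 2 ≤ Φ) : liYauProfile α R ≤ Φ ^ (α / 2) := by
  set a : ℝ := 2 ^ (1 - 1 / α)
  have ha2 : a ≤ 2 := two_rpow_one_sub_one_div_le_two hα0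
  have hRρ : R ≤ √3 * a := hRa.trans (le_mul_of_one_le_left (by positivity) (by simp))
  rcases le_or_gt s (√3 * a) with hsρ | hsρ
  · -- below the peak, monotonicity reduces the claim to `s` itself
    have hs12 : s ^ 2 ≤ 12 := by
      have := pow_le_pow_left₀ (hR.trans hRs) (hsρ.trans (by gcongr : √3 * a ≤ √3 * 2)) 2
      rw [mul_pow, sq_sqrt (by norm_num)] at this
      linarith
    calc liYauProfile α R ≤ liYauProfile α s :=
          liYauProfile_monotoneOn hα0 ⟨hR, hRρ⟩ ⟨hR.trans hRs, hsρ⟩ hRs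
      _ ≤ Φ ^ (α / 2) := liYauProfile_le_rpow hα0.le hα2 (hR.trans hRs) hs12 hΦ
  · -- beyond the peak, the quadratic lower bound `Φ ≥ 4 s² / π²` already gives `Φ ≥ R²`
    have hR2 : R ^ 2 ≤ Φ := by
      have h3a : 3 * a ^ 2 ≤ s ^ 2 := by
        have := pow_le_pow_left₀ (by positivity) hsρ.le 2
        rwa [mul_pow, sq_sqrt (by norm_num)] at this
      have hπ : π ^ 2 ≤ 12 := by nlinarith [pi_lt_d2, pi_pos]
      have hsΦ : s ^ 2 ≤ Φ * π ^ 2 / 4 := by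
        rw [div_mul_eq_mul_div, div_le_iff₀ (by positivity)] at hΦπ; linarith
      have hΦ0 : 0 ≤ Φ := le_trans (by positivity) hΦπ
      nlinarith [pow_le_pow_left₀ hR hRa 2, mul_le_mul_of_nonneg_left hπ hΦ0]
    have hRα := rpow_le_rpow (sq_nonneg R) hR2 (by positivity : 0 ≤ α / 2)
    rw [← rpow_natCast_mul hR, Nat.cast_ofNat, mul_div_cancel₀ _ two_ne_zero] at hRα
    have hc : 0 ≤ (1 / 12 : ℝ) ^ (α / 2) * R ^ (2 * α) := by positivity
    unfold liYauProfile
    linarith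

def cube (ι : Type*) : Set (EuclideanSpace ℝ ι) := {z | ∀ i, z i ∈ Icc (-π) π}

theorem isCompact_cube (ι : Type*) : IsCompact (cube ι) := by
  convert (EuclideanSpace.equiv ι ℝ).toHomeomorph.isCompact_preimage.2
    (isCompact_univ_pi fun _ => isCompact_Icc (a := -π) (b := π)) using 1
  ext; simp [cube, Pi.le_def, forall_and]

section LatticeSymbol

variable {ι : Type*} [Fintype ι]

noncomputable def latticeSymbol (z : EuclideanSpace ℝ ι) : ℝ := ∑ i, (2 - 2 * cos (z i))

theorem continuous_latticeSymbol : Continuous (latticeSymbol (ι := ι)) := by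
  unfold latticeSymbol; fun_prop

theorem norm_sq_sub_norm_pow_four_div_twelve_le_latticeSymbol (z : EuclideanSpace ℝ ι) :
    ‖z‖ ^ 2 - ‖z‖ ^ 4 / 12 ≤ latticeSymbol z := by
  have h4 : ∑ i, z i ^ 4 ≤ ‖z‖ ^ 4 := by
    rw [show ‖z‖ ^ 4 = (‖z‖ ^ 2) ^ 2 by ring, EuclideanSpace.real_norm_sq_eq]
    simpa [← pow_mul] using
      Finset.sum_sq_le_sq_sum_of_nonneg (s := Finset.univ) fun i _ => sq_nonneg (z i)
  calc ‖z‖ ^ 2 - ‖z‖ ^ 4 / 12 ≤ ∑ i, (z i ^ 2 - z i ^ 4 / 12) := by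
        rw [Finset.sum_sub_distrib, ← Finset.sum_div, EuclideanSpace.real_norm_sq_eq]; linarith
    _ ≤ latticeSymbol z :=
        Finset.sum_le_sum fun i _ => sq_sub_pow_four_div_twelve_le_two_sub_two_cos (z i)

theorem mul_norm_sq_le_latticeSymbol {z : EuclideanSpace ℝ ι} (hz : z ∈ cube ι) :
    4 / π ^ 2 * ‖z‖ ^ 2 ≤ latticeSymbol z := by
  rw [EuclideanSpace.real_norm_sq_eq, Finset.mul_sum]
  refine Finset.sum_le_sum fun i _ => ?_
  have := cos_le_one_sub_mul_cos_sq (abs_le.2 (hz i))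
  linarith [show 4 / π ^ 2 * z i ^ 2 = 2 * (2 / π ^ 2 * z i ^ 2) by ring]

theorem ball_subset_cube {R : ℝ} (hR : R ≤ π) : ball (0 : EuclideanSpace ℝ ι) R ⊆ cube ι :=
  fun z hz i => abs_le.1 <| ((PiLp.norm_apply_le z i).trans (mem_ball_zero_iff.1 hz).le).trans hR

end LatticeSymbol

theorem mul_setIntegral_le_setIntegral_mul {X : Type*} [MeasurableSpace X] {μ : Measure X}
    {s t : Set X} {f g h : X → ℝ} {m M : ℝ} (hs : MeasurableSet s) (ht : MeasurableSet t)
    (hts : t ⊆ s) (htμ : μ t ≠ ⊤) (hf : IntegrableOn f s μ)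
    (hgf : IntegrableOn (fun x => g x * f x) s μ)
    (hh : IntegrableOn h t μ) (hf0 : ∀ x ∈ s, 0 ≤ f x) (hfM : ∀ x ∈ s, f x ≤ M)
    (hmass : M * μ.real t ≤ ∫ x in s, f x ∂μ) (hm : 0 ≤ m) (hhm : ∀ x ∈ t, h x ≤ m)
    (hhg : ∀ x ∈ t, h x ≤ g x) (hmg : ∀ x ∈ s \ t, m ≤ g x) :
    M * ∫ x in t, h x ∂μ ≤ ∫ x in s, g x * f x ∂μ := by
  have hk : IntegrableOn (fun x => M * (h x - m)) t μ :=
    (hh.sub (integrableOn_const htμ)).const_mul M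
  -- on `t`, `(m - h) (M - f) ≥ 0` trades the missing mass of `f` against the deficit of `h`
  have hpt : ∀ x ∈ s, m * f x + t.indicator (fun x => M * (h x - m)) x ≤ g x * f x := by
    intro x hx
    by_cases hxt : x ∈ t
    · rw [indicator_of_mem hxt]
      nlinarith [hhg x hxt, hhm x hxt, hf0 x hx, hfM x hx]
    · rw [indicator_of_notMem hxt, add_zero]
      exact mul_le_mul_of_nonneg_right (hmg x ⟨hx, hxt⟩) (hf0 x hx)
  have hk_ind := (hk.integrable_indicator ht).integrableOn (s := s)
  have hmono : ∫ x in s, (m * f x + t.indicator (fun x => M * (h x - m)) x) ∂μ ≤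
      ∫ x in s, g x * f x ∂μ :=
    setIntegral_mono_on ((hf.const_mul m).add hk_ind) hgf hs hpt
  rw [integral_add (hf.const_mul m) hk_ind, integral_const_mul,
    setIntegral_indicator ht, inter_eq_self_of_subset_right hts, integral_const_mul,
    integral_sub hh (integrableOn_const htμ), setIntegral_const, smul_eq_mul] at hmono
  nlinarith [mul_le_mul_of_nonneg_left hmass hm]

theorem setIntegral_ball_norm_rpow {E : Type*} [NormedAddCommGroup E] [NormedSpace ℝ E]
    [FiniteDimensional ℝ E] [MeasurableSpace E] [BorelSpace E] [Nontrivial E]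
    (μ : Measure E) [μ.IsAddHaarMeasure] {R β : ℝ} (hR : 0 ≤ R)
    (hβ : -(Module.finrank ℝ E : ℝ) < β) :
    ∫ z in ball 0 R, ‖z‖ ^ β ∂μ = Module.finrank ℝ E * μ.real (ball 0 1) *
      (R ^ (Module.finrank ℝ E + β) / (Module.finrank ℝ E + β)) := by
  set n := Module.finrank ℝ E
  have hn : 1 ≤ n := Module.finrank_pos
  have hball : ball (0 : E) R = norm ⁻¹' Iio R := by ext; simp
  rw [← integral_indicator measurableSet_ball, hball,
    show (norm ⁻¹' Iio R).indicator (fun z : E => ‖z‖ ^ β) =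
      fun z => (Iio R).indicator (· ^ β) ‖z‖ from rfl,
    integral_fun_norm_addHaar μ, nsmul_eq_mul, smul_eq_mul, mul_assoc]
  congr 2
  calc ∫ y in Ioi (0 : ℝ), y ^ (n - 1) • (Iio R).indicator (· ^ β) y
      = ∫ y in Ioo 0 R, y ^ ((n : ℝ) - 1 + β) := by
        rw [← integral_indicator measurableSet_Ioi]
        simp_rw [← indicator_smul_apply (Iio R) (fun y : ℝ => y ^ (n - 1)) (· ^ β)]
        rw [integral_indicator measurableSet_Ioi, setIntegral_indicator measurableSet_Iio,
          Ioi_inter_Iio]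
        refine setIntegral_congr_fun measurableSet_Ioo fun y hy => ?_
        rw [smul_eq_mul, rpow_add hy.1, ← rpow_natCast, Nat.cast_sub hn, Nat.cast_one]
    _ = R ^ ((n : ℝ) + β) / ((n : ℝ) + β) := by
        rw [← integral_Ioc_eq_integral_Ioo, ← intervalIntegral.integral_of_le hR,
          integral_rpow (Or.inl (by linarith)), show (n : ℝ) - 1 + β + 1 = n + β by ring,
          zero_rpow (by linarith : (0 : ℝ) < n + β).ne', sub_zero]

theorem setIntegral_ball_liYauProfile {E : Type*} [NormedAddCommGroup E] [NormedSpace ℝ E]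
    [FiniteDimensional ℝ E] [MeasurableSpace E] [BorelSpace E] [Nontrivial E]
    (μ : Measure E) [μ.IsAddHaarMeasure] {α R : ℝ} (hα : 0 ≤ α) (hR : 0 ≤ R) :
    ∫ z in ball 0 R, liYauProfile α ‖z‖ ∂μ = Module.finrank ℝ E * μ.real (ball 0 1) *
      (R ^ (Module.finrank ℝ E + α) / (Module.finrank ℝ E + α) - (1 / 12 : ℝ) ^ (α / 2) *
        (R ^ (Module.finrank ℝ E + 2 * α) / (Module.finrank ℝ E + 2 * α))) := by
  have hn : (0 : ℝ) < Module.finrank ℝ E := by exact_mod_cast Module.finrank_pos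
  have hint : ∀ β : ℝ, 0 ≤ β → IntegrableOn (fun z : E => ‖z‖ ^ β) (ball 0 R) μ := fun β hβ =>
    ((continuous_norm.rpow_const fun _ => Or.inr hβ).continuousOn.integrableOn_compact
      (isCompact_closedBall 0 R)).mono_set ball_subset_closedBall
  unfold liYauProfile
  rw [integral_sub (hint α hα) ((hint (2 * α) (by positivity)).const_mul _), integral_const_mul,
    setIntegral_ball_norm_rpow μ hR (by linarith),
    setIntegral_ball_norm_rpow μ hR (by linarith)]
  ring

theorem mul_setIntegral_ball_liYauProfile_le {ι : Type*} [Fintype ι] {α R M : ℝ}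
    {F : EuclideanSpace ℝ ι → ℝ} (hα0 : 0 < α) (hα2 : α ≤ 2) (hR0 : 0 ≤ R)
    (hRa : R ≤ 2 ^ (1 - 1 / α)) (hF : Measurable F) (hF0 : ∀ z, 0 ≤ F z) (hFM : ∀ z, F z ≤ M)
    (hmass : M * volume.real (ball (0 : EuclideanSpace ℝ ι) R) ≤ ∫ z in cube ι, F z) :
    M * ∫ z in ball (0 : EuclideanSpace ℝ ι) R, liYauProfile α ‖z‖ ≤
      ∫ z in cube ι, latticeSymbol z ^ (α / 2) * F z := by
  have hR2 : R ≤ 2 := hRa.trans (two_rpow_one_sub_one_div_le_two hα0)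
  have hRρ : R ≤ √3 * 2 ^ (1 - 1 / α) :=
    hRa.trans (le_mul_of_one_le_left (by positivity) (by simp))
  have hcube := isCompact_cube ι
  have hFint : IntegrableOn F (cube ι) := Measure.integrableOn_of_bounded
    hcube.measure_lt_top.ne hF.aestronglyMeasurable (M := M)
    (ae_of_all _ fun z => by rw [norm_of_nonneg (hF0 z)]; exact hFM z)
  refine mul_setIntegral_le_setIntegral_mul hcube.measurableSet measurableSet_ball
    (ball_subset_cube (by linarith [pi_gt_three])) measure_ball_lt_top.ne hFint
    (hFint.continuousOn_mul ((continuous_latticeSymbol.rpow_const fun _ =>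
      Or.inr (by positivity)).continuousOn) hcube)
    (((continuous_liYauProfile hα0).comp continuous_norm).continuousOn.integrableOn_compact
      (isCompact_closedBall 0 R) |>.mono_set ball_subset_closedBall)
    (fun z _ => hF0 z) (fun z _ => hFM z) hmass (liYauProfile_nonneg hα0 hR0 hRρ) ?_ ?_ ?_
  · intro z hz
    have hz := (mem_ball_zero_iff.1 hz).le
    exact liYauProfile_monotoneOn hα0 ⟨norm_nonneg z, hz.trans hRρ⟩ ⟨hR0, hRρ⟩ hz
  · intro z hz
    have hz := (mem_ball_zero_iff.1 hz).le
    exact liYauProfile_le_rpow hα0.le hα2 (norm_nonneg z)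
      (by nlinarith [norm_nonneg z]) (norm_sq_sub_norm_pow_four_div_twelve_le_latticeSymbol z)
  · intro z ⟨hzC, hzB⟩
    exact liYauProfile_le_rpow_of_le hα0 hα2 hR0 hRa (not_lt.1 (mt mem_ball_zero_iff.2 hzB))
      (norm_sq_sub_norm_pow_four_div_twelve_le_latticeSymbol z) (mul_norm_sq_le_latticeSymbol hzC)

theorem li_yau_integral_inequality (d : ℕ) (hd : 1 ≤ d) (α : ℝ) (hα0 : 0 < α) (hα2 : α < 2)
    (M K : ℝ) (hM : 0 < M) (hK : 0 < K)
    (Vd : ℝ) (hVd : Vd = (volume (Metric.ball (0 : EuclideanSpace ℝ (Fin d)) 1)).toReal)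
    (ha : (K / (M * Vd)) ^ ((1 : ℝ) / d) ≤ 2 ^ (1 - 1 / α))
    (F : EuclideanSpace ℝ (Fin d) → ℝ) (hFmeas : Measurable F)
    (hF0 : ∀ z, 0 ≤ F z) (hFM : ∀ z, F z ≤ M)
    (hFint : K ≤ ∫ z in {z : EuclideanSpace ℝ (Fin d) | ∀ i, z i ∈ Set.Icc (-π) π}, F z) :
    ∫ z in {z : EuclideanSpace ℝ (Fin d) | ∀ i, z i ∈ Set.Icc (-π) π},
        (∑ i, (2 - 2 * Real.cos (z i))) ^ (α / 2) * F z ≥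
      d * K / (d + α) * (K / (M * Vd)) ^ (α / d) -
        (1 / 12 : ℝ) ^ (α / 2) * (d * K / (d + 2 * α)) * (K / (M * Vd)) ^ (2 * α / d) := by
  have : Nonempty (Fin d) := ⟨⟨0, hd⟩⟩
  have hVd0 : 0 < Vd := hVd ▸ ENNReal.toReal_pos (measure_ball_pos volume 0 one_pos).ne'
    measure_ball_lt_top.ne
  set x := K / (M * Vd) with hxdef
  have hx : 0 < x := by positivity
  have hMx : M * Vd * x = K := by rw [hxdef]; field_simp
  set R := x ^ ((1 : ℝ) / d)
  have hR : 0 < R := by positivity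
  have hRpow : ∀ β : ℝ, R ^ ((d : ℝ) + β) = x * x ^ (β / d) := fun β => by
    rw [rpow_add hR, ← rpow_mul hx.le, ← rpow_mul hx.le, one_div_mul_cancel (by positivity),
      rpow_one, one_div_mul_eq_div]
  have hmass : M * volume.real (ball (0 : EuclideanSpace ℝ (Fin d)) R) = K := by
    rw [measureReal_def, Measure.addHaar_ball_of_pos _ _ hR, ENNReal.toReal_mul, ← hVd,
      ENNReal.toReal_ofReal (by positivity), finrank_euclideanSpace_fin, ← rpow_natCast,
      ← add_zero (d : ℝ), hRpow, zero_div, rpow_zero, mul_one, ← hMx]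
    ring
  have key := mul_setIntegral_ball_liYauProfile_le hα0 hα2.le hR.le ha hFmeas hF0 hFM
    (hmass ▸ hFint)
  rw [setIntegral_ball_liYauProfile volume hα0.le hR.le, finrank_euclideanSpace_fin,
    measureReal_def, ← hVd, hRpow, hRpow] at key
  refine le_of_eq_of_le ?_ key
  rw [← hMx]
  field_simp
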